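/- arXiv:0810.0518 — 3 statements merged into one kernel-verified Lean document; each statement's English description precedes it below -/
import Mathlib

section
/- Let Ω be the set of vectors in {±1}^6 with evenly many −1 entries, and let G be the group of signed permutation matrices with evenly many −1 entries acting on Ω. If {a₁,a₂,a₃} and {b₁,b₂,b₃} are triples of distinct elements of Ω with d(aᵢ,aⱼ) = d(bᵢ,bⱼ) for all i,j, then there exists w ∈ G with w(aᵢ) = bᵢ for i = 1,2,3. -/
/-!
Record, at each coordinate `i`, which of `a₂ i`, `a₃ i` differ from `a₁ i`: a pattern in
`Bool × Bool`. The three distances `d(a₁,a₂)`, `d(a₁,a₃)`, `d(a₂,a₃)` count the coordinates whose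
pattern has first entry `true`, second entry `true`, resp. distinct entries; with the total `6`
these counts determine how many coordinates carry each pattern. Hence a permutation `σ` carries
the pattern of the `a`'s to that of the `b`'s, and with the signs `εᵢ = b₁ᵢ · a₁(σ i)` the
matrix `diag ε · P_σ` maps every `aₖ` to `bₖ`. The number of `-1`'s in `ε` is even because
`∏ ε = ∏ b₁ · ∏ a₁ = 1`.
-/

/-- A 6×6 monomial matrix with entries in `{+1, −1, 0}` having an even number of
entries equal to `−1`. -/
def IsSignedPermEven (M : Matrix (Fin 6) (Fin 6) ℝ) : Prop :=
  ∃ (σ : Equiv.Perm (Fin 6)) (ε : Fin 6 → ℝ),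
    (∀ i, ε i = 1 ∨ ε i = -1) ∧
    Even (Finset.univ.filter (fun i => ε i = -1)).card ∧
    M = fun i j => if σ i = j then ε i else 0

/-- The set of vectors in `{±1}^6` containing an even number of entries equal to `−1`. -/
def OmegaD6 : Set (Fin 6 → ℝ) :=
  {v | (∀ i, v i = 1 ∨ v i = -1) ∧
    Even (Finset.univ.filter (fun i => v i = -1)).card}

open Finset Matrix

section Signs

variable {x y z x' y' : ℝ}

lemma mul_self_eq_one_of_sign (hx : x = 1 ∨ x = -1) : x * x = 1 := by
  rcases hx with rfl | rfl <;> norm_num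

lemma mul_sign_of_sign (hx : x = 1 ∨ x = -1) (hy : y = 1 ∨ y = -1) :
    x * y = 1 ∨ x * y = -1 := by
  rcases hx with rfl | rfl <;> rcases hy with rfl | rfl <;> norm_num

lemma mul_eq_mul_of_ne_iff_ne (hx : x = 1 ∨ x = -1) (hy : y = 1 ∨ y = -1)
    (hx' : x' = 1 ∨ x' = -1) (hy' : y' = 1 ∨ y' = -1) (h : x ≠ y ↔ x' ≠ y') :
    x * y = x' * y' := by
  rcases hx with rfl | rfl <;> rcases hy with rfl | rfl <;>
    rcases hx' with rfl | rfl <;> rcases hy' with rfl | rfl <;> revert h <;> norm_num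

lemma ne_iff_decide_ne_ne_of_sign (hx : x = 1 ∨ x = -1) (hy : y = 1 ∨ y = -1)
    (hz : z = 1 ∨ z = -1) : y ≠ z ↔ decide (x ≠ y) ≠ decide (x ≠ z) := by
  rcases hx with rfl | rfl <;> rcases hy with rfl | rfl <;> rcases hz with rfl | rfl <;>
    norm_num

end Signs

section SignVectors

variable {ι : Type*} [Fintype ι]

lemma prod_eq_neg_one_pow_card {v : ι → ℝ} (hv : ∀ i, v i = 1 ∨ v i = -1) :
    ∏ i, v i = (-1) ^ #{i | v i = -1} := by
  rw [← prod_filter_mul_prod_filter_not univ (fun i => v i = -1),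
    prod_congr rfl (fun i hi => (mem_filter.mp hi).2), prod_const,
    prod_eq_one fun i hi => (hv i).resolve_right (mem_filter.mp hi).2, mul_one]

lemma even_card_neg_one_iff_prod_eq_one {v : ι → ℝ} (hv : ∀ i, v i = 1 ∨ v i = -1) :
    Even #{i | v i = -1} ↔ ∏ i, v i = 1 := by
  rw [prod_eq_neg_one_pow_card hv, neg_one_pow_eq_one_iff_even (by norm_num)]

lemma even_card_neg_one_mul_comp {u v : ι → ℝ} (hu : ∀ i, u i = 1 ∨ u i = -1)
    (hv : ∀ i, v i = 1 ∨ v i = -1) (hue : Even #{i | u i = -1}) (hve : Even #{i | v i = -1})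
    (σ : Equiv.Perm ι) : Even #{i | u i * v (σ i) = -1} := by
  rw [even_card_neg_one_iff_prod_eq_one fun i => mul_sign_of_sign (hu i) (hv (σ i)),
    prod_mul_distrib, Equiv.prod_comp σ v, (even_card_neg_one_iff_prod_eq_one hu).mp hue,
    (even_card_neg_one_iff_prod_eq_one hv).mp hve, mul_one]

end SignVectors

section Patterns

variable {ι : Type*} [Fintype ι]

lemma card_filter_eq_sum_card_fiber {α : Type*} [Fintype α] [DecidableEq α] (p : ι → α)
    (P : α → Prop) [DecidablePred P] :
    #{i | P (p i)} = ∑ c, if P c then #{i | p i = c} else 0 := by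
  rw [← sum_filter, card_eq_sum_card_fiberwise (f := p) (t := {c | P c})]
  · simp only [filter_filter]
    exact sum_congr rfl fun c hc => congrArg card (filter_congr fun i _ =>
      and_iff_right_of_imp fun h => h ▸ (mem_filter.mp hc).2)
  · intro i hi
    simpa using hi

lemma card_fiber_eq_of_card_filter_eq {p q : ι → Bool × Bool}
    (h₁ : #{i | (p i).1} = #{i | (q i).1}) (h₂ : #{i | (p i).2} = #{i | (q i).2})
    (h₃ : #{i | (p i).1 ≠ (p i).2} = #{i | (q i).1 ≠ (q i).2}) (c : Bool × Bool) :
    #{i | p i = c} = #{i | q i = c} := by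
  have htot : ∀ r : ι → Bool × Bool, ∑ c, #{i | r i = c} = Fintype.card ι := fun r => by
    rw [← card_univ, card_eq_sum_card_fiberwise (f := r) (t := univ) (by simp)]
  rw [card_filter_eq_sum_card_fiber p (·.1), card_filter_eq_sum_card_fiber q (·.1)] at h₁
  rw [card_filter_eq_sum_card_fiber p (·.2), card_filter_eq_sum_card_fiber q (·.2)] at h₂
  rw [card_filter_eq_sum_card_fiber p (fun c => c.1 ≠ c.2),
    card_filter_eq_sum_card_fiber q (fun c => c.1 ≠ c.2)] at h₃
  have hp := htot p
  have hq := htot q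
  simp only [Fintype.sum_prod_type, Fintype.sum_bool] at h₁ h₂ h₃ hp hq
  simp only [↓reduceIte, Bool.false_eq_true, Bool.true_eq_false, ne_eq, not_true_eq_false,
    not_false_eq_true, add_zero, zero_add] at h₁ h₂ h₃
  obtain ⟨_ | _, _ | _⟩ := c <;> omega

end Patterns

lemma exists_perm_comp_eq_of_card_fiber_eq {ι α : Type*} [Fintype ι] [DecidableEq α]
    {p q : ι → α} (h : ∀ c, #{i | p i = c} = #{i | q i = c}) :
    ∃ σ : Equiv.Perm ι, ∀ i, p (σ i) = q i := by
  classical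
  have e : ∀ c, {i // q i = c} ≃ {i // p i = c} := fun c =>
    Fintype.equivOfCardEq (by rw [Fintype.card_subtype, Fintype.card_subtype, h])
  exact ⟨Equiv.ofFiberEquiv e, Equiv.ofFiberEquiv_map e⟩

section SignedPerm

variable {ι : Type*} [Fintype ι] [DecidableEq ι]

def signedPermMatrix (σ : Equiv.Perm ι) (ε : ι → ℝ) : Matrix ι ι ℝ :=
  fun i j => if σ i = j then ε i else 0

lemma signedPermMatrix_mulVec (σ : Equiv.Perm ι) (ε v : ι → ℝ) :
    signedPermMatrix σ ε *ᵥ v = fun i => ε i * v (σ i) := by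
  ext i
  simp [signedPermMatrix, mulVec, dotProduct, ite_mul]

lemma signedPermMatrix_mulVec_eq_of_ne_iff_ne {σ : Equiv.Perm ι} {a₁ b₁ a b : ι → ℝ}
    (ha₁ : ∀ i, a₁ i = 1 ∨ a₁ i = -1) (hb₁ : ∀ i, b₁ i = 1 ∨ b₁ i = -1)
    (ha : ∀ i, a i = 1 ∨ a i = -1) (hb : ∀ i, b i = 1 ∨ b i = -1)
    (h : ∀ i, a₁ (σ i) ≠ a (σ i) ↔ b₁ i ≠ b i) :
    signedPermMatrix σ (fun i => b₁ i * a₁ (σ i)) *ᵥ a = b := by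
  ext i
  have hprod := mul_eq_mul_of_ne_iff_ne (ha₁ (σ i)) (ha (σ i)) (hb₁ i) (hb i) (h i)
  rw [signedPermMatrix_mulVec]
  linear_combination b₁ i * hprod + b i * mul_self_eq_one_of_sign (hb₁ i)

end SignedPerm

section DiffPattern

variable {ι : Type*} [Fintype ι]

def diffPattern {α : Type*} [DecidableEq α] (a₁ a₂ a₃ : ι → α) (i : ι) : Bool × Bool :=
  (decide (a₁ i ≠ a₂ i), decide (a₁ i ≠ a₃ i))

lemma hammingDist_eq_card_diffPattern_fst {α : Type*} [DecidableEq α] (a₁ a₂ a₃ : ι → α) :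
    hammingDist a₁ a₂ = #{i | (diffPattern a₁ a₂ a₃ i).1} := by
  simp [hammingDist, diffPattern]

lemma hammingDist_eq_card_diffPattern_snd {α : Type*} [DecidableEq α] (a₁ a₂ a₃ : ι → α) :
    hammingDist a₁ a₃ = #{i | (diffPattern a₁ a₂ a₃ i).2} := by
  simp [hammingDist, diffPattern]

lemma hammingDist_eq_card_diffPattern_fst_ne_snd {a₁ a₂ a₃ : ι → ℝ}
    (ha₁ : ∀ i, a₁ i = 1 ∨ a₁ i = -1) (ha₂ : ∀ i, a₂ i = 1 ∨ a₂ i = -1)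
    (ha₃ : ∀ i, a₃ i = 1 ∨ a₃ i = -1) :
    hammingDist a₂ a₃ = #{i | (diffPattern a₁ a₂ a₃ i).1 ≠ (diffPattern a₁ a₂ a₃ i).2} :=
  congrArg card (filter_congr fun i _ => ne_iff_decide_ne_ne_of_sign (ha₁ i) (ha₂ i) (ha₃ i))

lemma exists_perm_diffPattern_eq_of_hammingDist_eq {a₁ a₂ a₃ b₁ b₂ b₃ : ι → ℝ}
    (ha₁ : ∀ i, a₁ i = 1 ∨ a₁ i = -1) (ha₂ : ∀ i, a₂ i = 1 ∨ a₂ i = -1)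
    (ha₃ : ∀ i, a₃ i = 1 ∨ a₃ i = -1) (hb₁ : ∀ i, b₁ i = 1 ∨ b₁ i = -1)
    (hb₂ : ∀ i, b₂ i = 1 ∨ b₂ i = -1) (hb₃ : ∀ i, b₃ i = 1 ∨ b₃ i = -1)
    (h₁₂ : hammingDist a₁ a₂ = hammingDist b₁ b₂) (h₁₃ : hammingDist a₁ a₃ = hammingDist b₁ b₃)
    (h₂₃ : hammingDist a₂ a₃ = hammingDist b₂ b₃) :
    ∃ σ : Equiv.Perm ι, ∀ i, diffPattern a₁ a₂ a₃ (σ i) = diffPattern b₁ b₂ b₃ i := by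
  refine exists_perm_comp_eq_of_card_fiber_eq (card_fiber_eq_of_card_filter_eq ?_ ?_ ?_)
  · rwa [← hammingDist_eq_card_diffPattern_fst, ← hammingDist_eq_card_diffPattern_fst]
  · rwa [← hammingDist_eq_card_diffPattern_snd, ← hammingDist_eq_card_diffPattern_snd]
  · rwa [← hammingDist_eq_card_diffPattern_fst_ne_snd ha₁ ha₂ ha₃,
      ← hammingDist_eq_card_diffPattern_fst_ne_snd hb₁ hb₂ hb₃]

end DiffPattern

theorem exists_signedPermEven_mapping_triples_general
    (a₁ a₂ a₃ b₁ b₂ b₃ : Fin 6 → ℝ)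
    (ha₁ : a₁ ∈ OmegaD6) (ha₂ : a₂ ∈ OmegaD6) (ha₃ : a₃ ∈ OmegaD6)
    (hb₁ : b₁ ∈ OmegaD6) (hb₂ : b₂ ∈ OmegaD6) (hb₃ : b₃ ∈ OmegaD6)
    (h12 : hammingDist a₁ a₂ = hammingDist b₁ b₂)
    (h13 : hammingDist a₁ a₃ = hammingDist b₁ b₃)
    (h23 : hammingDist a₂ a₃ = hammingDist b₂ b₃) :
    ∃ M : Matrix (Fin 6) (Fin 6) ℝ, IsSignedPermEven M ∧
      M.mulVec a₁ = b₁ ∧ M.mulVec a₂ = b₂ ∧ M.mulVec a₃ = b₃ := by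
  obtain ⟨σ, hσ⟩ := exists_perm_diffPattern_eq_of_hammingDist_eq ha₁.1 ha₂.1 ha₃.1
    hb₁.1 hb₂.1 hb₃.1 h12 h13 h23
  have hsign : ∀ i, b₁ i * a₁ (σ i) = 1 ∨ b₁ i * a₁ (σ i) = -1 := fun i =>
    mul_sign_of_sign (hb₁.1 i) (ha₁.1 (σ i))
  refine ⟨signedPermMatrix σ (fun i => b₁ i * a₁ (σ i)),
    ⟨σ, _, hsign, even_card_neg_one_mul_comp hb₁.1 ha₁.1 hb₁.2 ha₁.2 σ, rfl⟩, ?_, ?_, ?_⟩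
  · exact signedPermMatrix_mulVec_eq_of_ne_iff_ne ha₁.1 hb₁.1 ha₁.1 hb₁.1 fun _ => by simp
  · exact signedPermMatrix_mulVec_eq_of_ne_iff_ne ha₁.1 hb₁.1 ha₂.1 hb₂.1 fun i =>
      decide_eq_decide.mp (congrArg Prod.fst (hσ i))
  · exact signedPermMatrix_mulVec_eq_of_ne_iff_ne ha₁.1 hb₁.1 ha₃.1 hb₃.1 fun i =>
      decide_eq_decide.mp (congrArg Prod.snd (hσ i))

/-- If `{a₁,a₂,a₃}` and `{b₁,b₂,b₃}` are triples of distinct elements of `Ω` whose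
pairwise Hamming distances agree, then some signed permutation matrix with evenly
many `−1` entries carries `aᵢ` to `bᵢ` for `i = 1, 2, 3`. -/
theorem exists_signedPermEven_mapping_triples
    (a₁ a₂ a₃ b₁ b₂ b₃ : Fin 6 → ℝ)
    (ha₁ : a₁ ∈ OmegaD6) (ha₂ : a₂ ∈ OmegaD6) (ha₃ : a₃ ∈ OmegaD6)
    (hb₁ : b₁ ∈ OmegaD6) (hb₂ : b₂ ∈ OmegaD6) (hb₃ : b₃ ∈ OmegaD6)
    (ha : a₁ ≠ a₂ ∧ a₁ ≠ a₃ ∧ a₂ ≠ a₃) (hb : b₁ ≠ b₂ ∧ b₁ ≠ b₃ ∧ b₂ ≠ b₃)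
    (h12 : hammingDist a₁ a₂ = hammingDist b₁ b₂)
    (h13 : hammingDist a₁ a₃ = hammingDist b₁ b₃)
    (h23 : hammingDist a₂ a₃ = hammingDist b₂ b₃) :
    ∃ M : Matrix (Fin 6) (Fin 6) ℝ, IsSignedPermEven M ∧
      M.mulVec a₁ = b₁ ∧ M.mulVec a₂ = b₂ ∧ M.mulVec a₃ = b₃ :=
  exists_signedPermEven_mapping_triples_general a₁ a₂ a₃ b₁ b₂ b₃ ha₁ ha₂ ha₃ hb₁ hb₂ hb₃ h12 h13
    h23
end

section
/- The subgroup of GL₇(R) generated by the permutation matrices M₇⁺(2,3), M₇⁺(3,4), M₇⁺(4,5), M₇⁺(5,6), M₇⁺(6,7) together with the matrix A₁ = diag([[1,1,1],[0,0,−1],[0,−1,0]], I₄) is isomorphic to the Coxeter group W(D₆) of order 23040, with the listed generators corresponding to the Coxeter generators s₁, s₂, s₃, s₄, s₅, s₁′ of W(D₆). -/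
/-!
Sending `s₁′ ↦ A₁` and `sᵢ ↦ M₇⁺(i+1, i+2)` respects the Coxeter relations (checked over `ℤ`),
which gives the representation. To count, use the chain `W(D₁) ⊂ W(D₂) ⊂ ⋯ ⊂ W(D₆)` of standard
parabolic subgroups. The group `W(D_k)` moves the basis vector `e_k`, `W(D_{k-1})` fixes it, and
`2k` explicit words of `W(D_k)` send it to the distinct vectors `e_j`, `e₀ - e_j` (`1 ≤ j ≤ k`).
Left multiplication by a generator of `W(D_k)` sends each of these words to another one times an
element of `W(D_{k-1})`; each such identity is certified by commutation and braid moves, found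
and checked by `decide`. Hence the words are coset representatives, `|W(D_k)| = 2k |W(D_{k-1})|`,
so `|W(D₆)| = 12 · 10 · 8 · 6 · 4 = 23040`; and an element acting trivially lies in every
`W(D_k)`, hence is `1`.
-/

/-- The 7×7 permutation matrix of the transposition `(i,j)`. -/
def P7 (i j : Fin 7) : Matrix (Fin 7) (Fin 7) ℝ :=
  fun k l => if Equiv.swap i j k = l then 1 else 0

/-- The matrix `A₁ = diag([[1,1,1],[0,0,−1],[0,−1,0]], I₄)`. -/
def A₁ : Matrix (Fin 7) (Fin 7) ℝ :=
  !![1, 1, 1, 0, 0, 0, 0;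
     0, 0, -1, 0, 0, 0, 0;
     0, -1, 0, 0, 0, 0, 0;
     0, 0, 0, 1, 0, 0, 0;
     0, 0, 0, 0, 1, 0, 0;
     0, 0, 0, 0, 0, 1, 0;
     0, 0, 0, 0, 0, 0, 1]

/-- The Coxeter matrix of type `D₆`, with index `0` corresponding to the vertex `1′`
(adjacent only to `2`) and indices `1, …, 5` corresponding to the vertices
`1, …, 5` of the path (with `i` adjacent to `j` iff `|i − j| = 1`). -/
def CoxD6 : CoxeterMatrix (Fin 6) where
  M := Matrix.of fun i j : Fin 6 =>
    if i = j then 1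
    else if (i.val = 0 ∧ j.val = 2) ∨ (j.val = 0 ∧ i.val = 2) ∨
        (1 ≤ i.val ∧ 1 ≤ j.val ∧ (i.val + 1 = j.val ∨ j.val + 1 = i.val)) then 3
    else 2
  off_diagonal i i' h := by
    simp only [Matrix.of_apply, if_neg h]
    split_ifs <;> decide

namespace CoxeterMatrix

variable {B : Type*} (M : CoxeterMatrix B)

section Rewriting

variable [DecidableEq B]

def pull (a : B) : List B → Option (List B)
  | [] => none
  | b :: ω => if b = a then some ω else if M a b = 2 then (pull a ω).map (b :: ·) else none

/-- `n` is fuel: every recursive call consumes a letter of `ω`, so `ω.length` suffices. -/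
def push : ℕ → B → List B → List B
  | 0, a, ω => a :: ω
  | _ + 1, a, [] => [a]
  | n + 1, a, b :: ω =>
    if b = a then ω
    else if M a b = 2 then b :: push n a ω
    else if M a b = 3 then
      match M.pull a ω with
      | some ω' => b :: a :: push n b ω'
      | none => a :: b :: ω
    else a :: b :: ω

end Rewriting

section Normalize

variable [LinearOrder B]

def insertComm (a : B) : List B → List B
  | [] => [a]
  | b :: ω => if b < a ∧ M a b = 2 then b :: insertComm a ω else a :: b :: ω

/-- Insertion sort along commutations: not a canonical form for commutation classes in general,
but enough to recognise all the identities needed here. -/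
def commNormalize (ω : List B) : List B := ω.foldr M.insertComm []

end Normalize

end CoxeterMatrix

namespace CoxeterSystem

variable {B W : Type*} [Group W] {M : CoxeterMatrix B} (cs : CoxeterSystem M W)

local prefix:100 "s" => cs.simple
local prefix:100 "π" => cs.wordProd

theorem simple_mul_simple_comm {i j : B} (h : M i j = 2) : s i * s j = s j * s i := by
  simpa [braidWord, h, M.symmetric j i, alternatingWord, wordProd]
    using cs.wordProd_braidWord_eq i j

theorem simple_braid {i j : B} (h : M i j = 3) : s i * s j * s i = s j * s i * s j := by
  simpa [braidWord, h, M.symmetric j i, alternatingWord, wordProd, mul_assoc]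
    using (cs.wordProd_braidWord_eq i j).symm

theorem wordProd_mem_closure {J : Set B} {ω : List B} (h : ∀ i ∈ ω, i ∈ J) :
    π ω ∈ Subgroup.closure (cs.simple '' J) := by
  induction ω with
  | nil => exact Subgroup.one_mem _
  | cons i ω ih =>
    rw [wordProd_cons]
    exact Subgroup.mul_mem _ (Subgroup.subset_closure ⟨i, h i (by simp), rfl⟩)
      (ih fun j hj => h j (List.mem_cons_of_mem i hj))

theorem range_eq_closure_range_simple {G : Type*} [Monoid G] (φ : W →* G) :
    Set.range φ = Submonoid.closure (Set.range (φ ∘ cs.simple)) := by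
  rw [Set.range_comp, ← MonoidHom.map_mclosure, cs.submonoid_closure_range_simple,
    ← MonoidHom.mrange_eq_map, MonoidHom.coe_mrange]

section Rewriting

variable [DecidableEq B]

theorem wordProd_eq_of_pull_eq_some {a : B} {ω ω' : List B} (h : M.pull a ω = some ω') :
    π ω = s a * π ω' := by
  induction ω generalizing ω' with
  | nil => simp [CoxeterMatrix.pull] at h
  | cons b ω ih =>
    simp only [CoxeterMatrix.pull] at h
    split_ifs at h with hb hab
    · cases h; subst hb; rw [wordProd_cons]
    · obtain ⟨ω'', h'', rfl⟩ := Option.map_eq_some_iff.mp h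
      rw [wordProd_cons, wordProd_cons, ih h'', ← mul_assoc, ← mul_assoc,
        cs.simple_mul_simple_comm hab]

theorem wordProd_push (n : ℕ) (a : B) (ω : List B) : π (M.push n a ω) = s a * π ω := by
  induction n generalizing a ω with
  | zero => rw [CoxeterMatrix.push, wordProd_cons]
  | succ n ih =>
    cases ω with
    | nil => simp [CoxeterMatrix.push]
    | cons b ω =>
      simp only [CoxeterMatrix.push]
      split_ifs with hb hab hab3
      · subst hb; rw [wordProd_cons, simple_mul_simple_cancel_left]
      · rw [wordProd_cons, wordProd_cons, ih, ← mul_assoc, ← mul_assoc,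
          cs.simple_mul_simple_comm hab]
      · split
        · rename_i ω' hω'
          rw [wordProd_cons, wordProd_cons, ih, wordProd_cons,
            cs.wordProd_eq_of_pull_eq_some hω']
          simp only [← mul_assoc, cs.simple_braid hab3]
        · rw [wordProd_cons]
      · rw [wordProd_cons]

end Rewriting

section Normalize

variable [LinearOrder B]

theorem wordProd_insertComm (a : B) (ω : List B) : π (M.insertComm a ω) = s a * π ω := by
  induction ω with
  | nil => simp [CoxeterMatrix.insertComm]
  | cons b ω ih =>
    simp only [CoxeterMatrix.insertComm]
    split_ifs with h
    · rw [wordProd_cons, ih, wordProd_cons, ← mul_assoc, ← mul_assoc,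
        cs.simple_mul_simple_comm h.2]
    · rw [wordProd_cons]

theorem wordProd_commNormalize (ω : List B) : π (M.commNormalize ω) = π ω := by
  induction ω with
  | nil => rfl
  | cons a ω ih =>
    rw [CoxeterMatrix.commNormalize, List.foldr_cons, wordProd_insertComm, wordProd_cons]
    exact congrArg _ ih

theorem simple_mul_wordProd_of_commNormalize_push_eq [DecidableEq B] {a : B} {ω ω' : List B}
    (h : M.commNormalize (M.push ω.length a ω) = M.commNormalize ω') : s a * π ω = π ω' := by
  rw [← cs.wordProd_push ω.length, ← cs.wordProd_commNormalize, h, wordProd_commNormalize]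

end Normalize

end CoxeterSystem

section CosetReps

variable {G X ι : Type*} [Group G] {H K : Subgroup G} {rep : ι → G}

theorem Subgroup.exists_inv_mul_mem_of_mem_closure {S : Set G} (hS : ∀ s ∈ S, s⁻¹ ∈ S)
    {r₀ : ι} (h₀ : rep r₀ ∈ H) (hstep : ∀ s ∈ S, ∀ r, ∃ r', (rep r')⁻¹ * (s * rep r) ∈ H)
    {g : G} (hg : g ∈ Subgroup.closure S) : ∃ r, (rep r)⁻¹ * g ∈ H := by
  have step : ∀ s ∈ S, ∀ y, (∃ r, (rep r)⁻¹ * y ∈ H) → ∃ r, (rep r)⁻¹ * (s * y) ∈ H := by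
    rintro s hs y ⟨r, hr⟩
    obtain ⟨r', hr'⟩ := hstep s hs r
    exact ⟨r', by simpa [mul_assoc] using H.mul_mem hr' hr⟩
  induction hg using Subgroup.closure_induction_left with
  | one => exact ⟨r₀, by simpa using h₀⟩
  | mul_left s hs y _ ih => exact step s hs y ih
  | inv_mul_cancel s hs y _ ih => exact step s⁻¹ (hS s hs) y ih

variable [MulAction G X] {x : X}

theorem MulAction.smul_eq_smul_of_inv_mul_mem (hHx : H ≤ MulAction.stabilizer G x) {g g' : G}
    (h : g⁻¹ * g' ∈ H) : g' • x = g • x := by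
  rw [← mul_inv_cancel_left g g', mul_smul, MulAction.mem_stabilizer_iff.mp (hHx h)]

variable (hHx : H ≤ MulAction.stabilizer G x) (hsep : Function.Injective (rep · • x))
  (hcover : ∀ g ∈ K, ∃ r, (rep r)⁻¹ * g ∈ H)
include hHx hsep hcover

theorem Subgroup.card_eq_of_smul_injective (hHK : H ≤ K) (hrepK : ∀ r, rep r ∈ K) :
    Nat.card K = Nat.card ι * Nat.card H := by
  let f : ι × H → K := fun p => ⟨rep p.1 * p.2, K.mul_mem (hrepK p.1) (hHK p.2.2)⟩
  have hf : Function.Bijective f := by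
    refine ⟨fun ⟨r, h⟩ ⟨r', h'⟩ heq => ?_, fun ⟨g, hg⟩ => ?_⟩
    · have heq : rep r * h = rep r' * h' := congrArg Subtype.val heq
      have hfix (r : ι) (h : H) : (rep r * h) • x = rep r • x :=
        MulAction.smul_eq_smul_of_inv_mul_mem hHx (by simp [h.2])
      obtain rfl : r = r' := hsep <| by simp only [← hfix r h, ← hfix r' h', heq]
      simp [Subtype.ext_iff, mul_left_cancel heq]
    · obtain ⟨r, hr⟩ := hcover g hg
      exact ⟨(r, ⟨_, hr⟩), by simp [f]⟩
  rw [← Nat.card_prod, Nat.card_congr (Equiv.ofBijective f hf)]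

theorem Subgroup.inf_stabilizer_le_of_smul_injective {r₀ : ι} (h₀ : rep r₀ ∈ H) :
    K ⊓ MulAction.stabilizer G x ≤ H := by
  rintro g ⟨hgK, hgx⟩
  obtain ⟨r, hr⟩ := hcover g hgK
  obtain rfl : r = r₀ := hsep <| by
    simp only
    rw [← MulAction.smul_eq_smul_of_inv_mul_mem hHx hr, MulAction.mem_stabilizer_iff.mp hgx,
      MulAction.mem_stabilizer_iff.mp (hHx h₀)]
  simpa using H.mul_mem h₀ hr

end CosetReps

namespace CoxD6

open Matrix

/-- The matrices of the statement over any ring, so that the relations and the action can be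
checked by `decide` over `ℤ`. -/
def gen (R : Type*) [Ring R] (i : Fin 6) : Matrix (Fin 7) (Fin 7) R :=
  if i = 0 then
    !![1, 1, 1, 0, 0, 0, 0;
       0, 0, -1, 0, 0, 0, 0;
       0, -1, 0, 0, 0, 0, 0;
       0, 0, 0, 1, 0, 0, 0;
       0, 0, 0, 0, 1, 0, 0;
       0, 0, 0, 0, 0, 1, 0;
       0, 0, 0, 0, 0, 0, 1]
  else Matrix.of fun k l => if Equiv.swap i.castSucc i.succ k = l then 1 else 0

theorem map_gen {R S : Type*} [Ring R] [Ring S] (f : R →+* S) (i : Fin 6) :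
    (gen R i).map f = gen S i := by
  ext k l
  by_cases hi : i = 0
  · subst hi; fin_cases k <;> fin_cases l <;> simp [gen]
  · simp [gen, hi, apply_ite f]

theorem range_gen_real :
    Set.range (gen ℝ) = {P7 1 2, P7 2 3, P7 3 4, P7 4 5, P7 5 6, A₁} := by
  have : gen ℝ = ![A₁, P7 1 2, P7 2 3, P7 3 4, P7 4 5, P7 5 6] := by
    funext i; fin_cases i <;> rfl
  ext x
  simp only [this, Matrix.range_cons, Matrix.range_empty, Set.union_empty, Set.singleton_union,
    Set.mem_insert_iff, Set.mem_singleton_iff]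
  tauto

theorem isLiftable_gen : CoxD6.IsLiftable (gen ℤ) := by
  unfold CoxeterMatrix.IsLiftable
  decide

def intRep : CoxD6.Group →* Matrix (Fin 7) (Fin 7) ℤ :=
  CoxD6.toCoxeterSystem.lift ⟨gen ℤ, isLiftable_gen⟩

theorem intRep_simple (i : Fin 6) : intRep (CoxD6.toCoxeterSystem.simple i) = gen ℤ i :=
  CoxD6.toCoxeterSystem.lift_apply_simple isLiftable_gen i

instance : MulAction CoxD6.Group (Fin 7 → ℤ) := MulAction.compHom _ intRep

theorem smul_def (g : CoxD6.Group) (v : Fin 7 → ℤ) : g • v = intRep g *ᵥ v := rfl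

theorem simple_smul (i : Fin 6) (v : Fin 7 → ℤ) :
    CoxD6.toCoxeterSystem.simple i • v = gen ℤ i *ᵥ v := by
  rw [smul_def, intRep_simple]

theorem wordProd_smul (ω : List (Fin 6)) (v : Fin 7 → ℤ) :
    CoxD6.toCoxeterSystem.wordProd ω • v = ω.foldr (gen ℤ · *ᵥ ·) v := by
  induction ω with
  | nil => simp
  | cons i ω ih => rw [CoxeterSystem.wordProd_cons, mul_smul, ih, simple_smul, List.foldr_cons]

/-- Empty for `k = 1`: `W(D₁)` is trivial, whereas `s₁′` alone would generate a group of order 2. -/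
def letters (k : ℕ) : Finset (Fin 6) := Finset.univ.filter fun i => 2 ≤ k ∧ i.val < k

def subgroupD (k : ℕ) : Subgroup CoxD6.Group :=
  Subgroup.closure (CoxD6.toCoxeterSystem.simple '' letters k)

theorem subgroupD_one : subgroupD 1 = ⊥ := by
  simp [subgroupD, letters]

theorem subgroupD_six : subgroupD 6 = ⊤ := by
  have : (letters 6 : Set (Fin 6)) = Set.univ := by ext i; simp [letters]
  rw [subgroupD, this, Set.image_univ, CoxeterSystem.subgroup_closure_range_simple]

/-- The words `s_{r+1} ⋯ s_{k-1}` (for `r < k`) and `s_j ⋯ s₁ s₁′ s₂ ⋯ s_{k-1}` (for `r = k + j`),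
which send `e_k` to `e_{r+1}` and to `e₀ - e_{j+1}` respectively. -/
def cosetRep (k : ℕ) (r : Fin (2 * k)) : List (Fin 6) :=
  if r.val < k then (List.range' (r.val + 1) (k - 1 - r.val)).map (Fin.ofNat 6)
  else ((List.range' 1 (r.val - k)).reverse ++ 0 :: List.range' 2 (k - 2)).map (Fin.ofNat 6)

def basisVec (k : ℕ) : Fin 7 → ℤ := Pi.single (Fin.ofNat 7 k) 1

section Layer

variable {k : ℕ} (hk : k ∈ Finset.Icc 1 5)
include hk

theorem cosetRep_subset_letters (r : Fin (2 * (k + 1))) :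
    ∀ i ∈ cosetRep (k + 1) r, i ∈ letters (k + 1) := by
  obtain ⟨h1, h5⟩ := Finset.mem_Icc.mp hk
  revert r
  interval_cases k <;> decide

theorem gen_mulVec_basisVec {i : Fin 6} (hi : i ∈ letters k) :
    gen ℤ i *ᵥ basisVec (k + 1) = basisVec (k + 1) := by
  obtain ⟨h1, h5⟩ := Finset.mem_Icc.mp hk
  revert i
  interval_cases k <;> decide

theorem cosetRep_smul_injective :
    Function.Injective fun r => (cosetRep (k + 1) r).foldr (gen ℤ · *ᵥ ·) (basisVec (k + 1)) := by
  obtain ⟨h1, h5⟩ := Finset.mem_Icc.mp hk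
  interval_cases k <;> decide

theorem exists_commNormalize_push_eq {i : Fin 6} (hi : i ∈ letters (k + 1))
    (r : Fin (2 * (k + 1))) : ∃ r', ∃ t : Option (Fin 6), (∀ j ∈ t, j ∈ letters k) ∧
      CoxD6.commNormalize (CoxD6.push (cosetRep (k + 1) r).length i (cosetRep (k + 1) r)) =
        CoxD6.commNormalize (cosetRep (k + 1) r' ++ t.toList) := by
  obtain ⟨h1, h5⟩ := Finset.mem_Icc.mp hk
  revert i r
  interval_cases k <;> decide

theorem subgroupD_le_stabilizer :
    subgroupD k ≤ MulAction.stabilizer CoxD6.Group (basisVec (k + 1)) := by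
  rw [subgroupD, Subgroup.closure_le]
  rintro _ ⟨i, hi, rfl⟩
  rw [SetLike.mem_coe, MulAction.mem_stabilizer_iff, simple_smul]
  exact gen_mulVec_basisVec hk hi

theorem exists_cosetRep_inv_mul_mem {g : CoxD6.Group} (hg : g ∈ subgroupD (k + 1)) :
    ∃ r, (CoxD6.toCoxeterSystem.wordProd (cosetRep (k + 1) r))⁻¹ * g ∈ subgroupD k := by
  refine Subgroup.exists_inv_mul_mem_of_mem_closure ?_ (r₀ := ⟨k, by omega⟩) ?_ ?_ hg
  · rintro _ ⟨i, hi, rfl⟩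
    exact ⟨i, hi, (CoxD6.toCoxeterSystem.inv_simple i).symm⟩
  · simp [cosetRep]
  · rintro _ ⟨i, hi, rfl⟩ r
    obtain ⟨r', t, ht, h⟩ := exists_commNormalize_push_eq hk hi r
    refine ⟨r', ?_⟩
    rw [CoxD6.toCoxeterSystem.simple_mul_wordProd_of_commNormalize_push_eq h,
      CoxeterSystem.wordProd_append, inv_mul_cancel_left]
    exact CoxD6.toCoxeterSystem.wordProd_mem_closure (by simpa using ht)

theorem card_subgroupD_succ :
    Nat.card (subgroupD (k + 1)) = 2 * (k + 1) * Nat.card (subgroupD k) := by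
  rw [← Nat.card_fin (2 * (k + 1))]
  refine Subgroup.card_eq_of_smul_injective (subgroupD_le_stabilizer hk)
    (by simpa only [wordProd_smul] using cosetRep_smul_injective hk)
    (fun g => exists_cosetRep_inv_mul_mem hk) ?_
    (fun r => CoxD6.toCoxeterSystem.wordProd_mem_closure (cosetRep_subset_letters hk r))
  refine Subgroup.closure_mono (Set.image_mono fun i hi => ?_)
  simp only [letters, Finset.coe_filter, Finset.mem_univ, true_and, Set.mem_ofPred_eq] at hi ⊢
  omega

theorem subgroupD_succ_inf_stabilizer_le :
    subgroupD (k + 1) ⊓ MulAction.stabilizer CoxD6.Group (basisVec (k + 1)) ≤ subgroupD k :=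
  Subgroup.inf_stabilizer_le_of_smul_injective (subgroupD_le_stabilizer hk)
    (by simpa only [wordProd_smul] using cosetRep_smul_injective hk)
    (fun g => exists_cosetRep_inv_mul_mem hk) (r₀ := ⟨k, by omega⟩) (by simp [cosetRep])

end Layer

theorem card_group : Nat.card CoxD6.Group = 23040 := by
  rw [← Subgroup.card_top, ← subgroupD_six, card_subgroupD_succ (k := 5) (by decide),
    card_subgroupD_succ (k := 4) (by decide), card_subgroupD_succ (k := 3) (by decide),
    card_subgroupD_succ (k := 2) (by decide), card_subgroupD_succ (k := 1) (by decide),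
    subgroupD_one, Subgroup.card_bot]

theorem intRep_injective : Function.Injective intRep := by
  have step : ∀ k ∈ Finset.Icc 1 5, intRep.ker ≤ subgroupD (k + 1) → intRep.ker ≤ subgroupD k :=
    fun k hk h g hg => subgroupD_succ_inf_stabilizer_le hk
      ⟨h hg, MulAction.mem_stabilizer_iff.mpr (by rw [smul_def, hg, one_mulVec])⟩
  rw [← MonoidHom.ker_eq_bot_iff, eq_bot_iff, ← subgroupD_one]
  exact step 1 (by decide) <| step 2 (by decide) <| step 3 (by decide) <| step 4 (by decide) <|
    step 5 (by decide) (subgroupD_six ▸ le_top)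

end CoxD6

/-- The subgroup of `GL₇(ℝ)` generated by `M₇⁺(2,3)`, `M₇⁺(3,4)`, `M₇⁺(4,5)`,
`M₇⁺(5,6)`, `M₇⁺(6,7)` and `A₁` is isomorphic to the Coxeter group `W(D₆)` of order
`23040`, with the listed generators corresponding to the Coxeter generators
`s₁, s₂, s₃, s₄, s₅, s₁′`.  (Indices of `P7` are 0-based.) -/
theorem subgroup_iso_coxeterD6 :
    ∃ φ : CoxD6.Group →* Matrix (Fin 7) (Fin 7) ℝ,
      Function.Injective φ ∧
      φ (CoxD6.simple 1) = P7 1 2 ∧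
      φ (CoxD6.simple 2) = P7 2 3 ∧
      φ (CoxD6.simple 3) = P7 3 4 ∧
      φ (CoxD6.simple 4) = P7 4 5 ∧
      φ (CoxD6.simple 5) = P7 5 6 ∧
      φ (CoxD6.simple 0) = A₁ ∧
      Set.range φ =
        ↑(Submonoid.closure ({P7 1 2, P7 2 3, P7 3 4, P7 4 5, P7 5 6, A₁} :
          Set (Matrix (Fin 7) (Fin 7) ℝ))) ∧
      Nat.card CoxD6.Group = 23040 := by
  let φ := (Int.castRingHom ℝ).mapMatrix.toMonoidHom.comp CoxD6.intRep
  have hφ : φ ∘ CoxD6.toCoxeterSystem.simple = CoxD6.gen ℝ := by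
    funext i
    change (CoxD6.intRep (CoxD6.toCoxeterSystem.simple i)).map (Int.castRingHom ℝ) = _
    rw [CoxD6.intRep_simple, CoxD6.map_gen]
  have hφ' (i : Fin 6) : φ (CoxD6.simple i) = CoxD6.gen ℝ i := by
    rw [← hφ, CoxeterMatrix.toCoxeterSystem_simple]; rfl
  refine ⟨φ, (Matrix.map_injective Int.cast_injective).comp CoxD6.intRep_injective,
    hφ' 1, hφ' 2, hφ' 3, hφ' 4, hφ' 5, hφ' 0, ?_, CoxD6.card_group⟩
  rw [CoxD6.toCoxeterSystem.range_eq_closure_range_simple, hφ, CoxD6.range_gen_real]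
end

section
/- Let a, b, c, d, e, f, g be complex numbers satisfying e + f + g − a − b − c − d = 1. Then sin π(f−b) sin π(f−a−c) sin π(e−c) sin π(e−a−b) − sin π(e−b) sin π(e−a−c) sin π(f−c) sin π(f−a−b) = sin πa · sin π(c−b) · sin π(f−e) · sin π(g−d). -/
open Complex

private noncomputable def Ee (t : ℂ) : ℂ := Complex.exp (↑Real.pi * I * t)

private lemma Ee_ne (t : ℂ) : Ee t ≠ 0 := Complex.exp_ne_zero _

private lemma Ee_add (x y : ℂ) : Ee (x + y) = Ee x * Ee y := by
  simp [Ee, mul_add, Complex.exp_add]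

private lemma Ee_sub (x y : ℂ) : Ee (x - y) = Ee x / Ee y := by
  simp [Ee, mul_sub, Complex.exp_sub]

private lemma sinEe (t : ℂ) : Complex.sin (↑Real.pi * t) = (Ee t - (Ee t)⁻¹) / (2 * I) := by
  rw [Complex.sin, Ee, ← Complex.exp_neg]
  field_simp
  ring_nf
  rw [Complex.I_sq]
  ring

set_option maxHeartbeats 2000000 in
/-- The four-term trigonometric identity (6.4), valid under the Saalschutzian
constraint `e + f + g − a − b − c − d = 1`. -/
theorem sine_identity_saalschutzian (a b c d e f g : ℂ)
    (h : e + f + g - a - b - c - d = 1) :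
    Complex.sin (↑Real.pi * (f - b)) * Complex.sin (↑Real.pi * (f - a - c)) *
        Complex.sin (↑Real.pi * (e - c)) * Complex.sin (↑Real.pi * (e - a - b)) -
      Complex.sin (↑Real.pi * (e - b)) * Complex.sin (↑Real.pi * (e - a - c)) *
        Complex.sin (↑Real.pi * (f - c)) * Complex.sin (↑Real.pi * (f - a - b)) =
    Complex.sin (↑Real.pi * a) * Complex.sin (↑Real.pi * (c - b)) *
      Complex.sin (↑Real.pi * (f - e)) * Complex.sin (↑Real.pi * (g - d)) := by
  have hg : g - d = 1 + (a + b + c - e - f) := by linear_combination h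
  rw [hg]
  have h1 : Complex.sin (↑Real.pi * (1 + (a + b + c - e - f)))
      = - Complex.sin (↑Real.pi * (a + b + c - e - f)) := by
    rw [mul_add, mul_one, Complex.sin_add]
    simp [← Complex.ofReal_sin, ← Complex.ofReal_cos]
  rw [h1]
  simp only [sinEe, Ee_sub, Ee_add]
  have hI : (I : ℂ) ≠ 0 := Complex.I_ne_zero
  field_simp [Ee_ne]
  ring
end
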